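/- arXiv:2207.14654 — 2 statements merged into one kernel-verified Lean document; each statement's English description precedes it below -/
import Mathlib

section
/- Assume |E(log p_1)| < ∞ and |E(log(1−p_1))| < ∞, and assume G is continuous on [0,∞). Then there is a unique α ≥ 0 such that G(α) = α and G(ψ) < ψ for all ψ > α. -/
open MeasureTheory ProbabilityTheory Filter Set Metric
open scoped ENNReal NNReal

noncomputable section

/-- The step-`v.length` Moran interval determined by the digit string `v`
(`false` = left child, `true` = right child), where `a n`, `b n` are the scaling
ratios used at step `n` (`n ≥ 1`).  The auxiliary version tracks the current step,
left endpoint and length. -/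
def moranAux (a b : ℕ → ℝ) : ℕ → ℝ → ℝ → List Bool → Set ℝ
  | _, l, len, [] => Set.Icc l (l + len)
  | n, l, len, c :: v =>
    if c then moranAux a b (n + 1) (l + len - b (n + 1) * len) (b (n + 1) * len) v
    else moranAux a b (n + 1) l (a (n + 1) * len) v

def moranInt (a b : ℕ → ℝ) (v : List Bool) : Set ℝ := moranAux a b 0 0 1 v

/-- The length `|I_v|` of the Moran interval with digit string `v`. -/
def moranLenAux (a b : ℕ → ℝ) : ℕ → ℝ → List Bool → ℝ
  | _, len, [] => len
  | n, len, c :: v => moranLenAux a b (n + 1) ((if c then b (n + 1) else a (n + 1)) * len) v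

def moranLen (a b : ℕ → ℝ) (v : List Bool) : ℝ := moranLenAux a b 0 1 v

/-- The mass `μ_ω(I_v)` assigned to the Moran interval with digit string `v`. -/
def moranMassAux (p : ℕ → ℝ) : ℕ → ℝ → List Bool → ℝ
  | _, m, [] => m
  | n, m, c :: v => moranMassAux p (n + 1) ((if c then 1 - p (n + 1) else p (n + 1)) * m) v

def moranMass (p : ℕ → ℝ) (v : List Bool) : ℝ := moranMassAux p 0 1 v

/-- The Moran set `C_ω = ⋂ₙ C_ω^{(n)}`. -/
def moranSet (a b : ℕ → ℝ) : Set ℝ :=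
  ⋂ n : ℕ, ⋃ v ∈ {v : List Bool | v.length = n}, moranInt a b v

/-- The (topological) support of a measure on `ℝ`. -/
def measSupport (μ : Measure ℝ) : Set ℝ := {x : ℝ | ∀ r : ℝ, 0 < r → 0 < μ (ball x r)}

/-- A dimension function: `Φ : (0,1) → ℝ⁺` with `t ^ (1 + Φ t)` decreasing to `0`
as `t` decreases to `0`. -/
def DimensionFunction (Φ : ℝ → ℝ) : Prop :=
  (∀ t, t ∈ Ioo (0:ℝ) 1 → 0 ≤ Φ t) ∧
  (∀ s t, s ∈ Ioo (0:ℝ) 1 → t ∈ Ioo (0:ℝ) 1 → s ≤ t → s ^ (1 + Φ s) ≤ t ^ (1 + Φ t)) ∧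
  Tendsto (fun t : ℝ => t ^ (1 + Φ t)) (nhdsWithin 0 (Ioi 0)) (nhds 0)

/-- A large dimension function: `Φ(t) = H(t)·log|log t|/|log t|` with `H(t) → ∞` as `t → 0⁺`. -/
def LargeDimFn (Φ : ℝ → ℝ) : Prop :=
  DimensionFunction Φ ∧
  ∃ H : ℝ → ℝ, (∀ t, t ∈ Ioo (0:ℝ) 1 → Φ t = H t * Real.log |Real.log t| / |Real.log t|) ∧
    Tendsto H (nhdsWithin 0 (Ioi 0)) atTop

/-- A small dimension function: `Φ(t) = H(t)·log|log t|/|log t|` with `H(t) → 0` as `t → 0⁺`. -/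
def SmallDimFn (Φ : ℝ → ℝ) : Prop :=
  DimensionFunction Φ ∧
  ∃ H : ℝ → ℝ, (∀ t, t ∈ Ioo (0:ℝ) 1 → Φ t = H t * Real.log |Real.log t| / |Real.log t|) ∧
    Tendsto H (nhdsWithin 0 (Ioi 0)) (nhds 0)

/-- `d` is admissible for the upper `Φ`-dimension of `μ`: there are `C₁, C₂ > 0` with
`μ(B(x,R)) ≤ C₂ (R/r)^d μ(B(x,r))` for all `x ∈ supp μ` and `0 < r < R^{1+Φ(R)} ≤ R ≤ C₁`. -/
def upperDimAdmissible (Φ : ℝ → ℝ) (μ : Measure ℝ) (d : ℝ) : Prop :=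
  ∃ C₁ > (0:ℝ), ∃ C₂ > (0:ℝ), ∀ x ∈ measSupport μ, ∀ R r : ℝ,
    0 < r → r < R ^ (1 + Φ R) → R ^ (1 + Φ R) ≤ R → R ≤ C₁ →
    μ (ball x R) ≤ ENNReal.ofReal (C₂ * (R / r) ^ d) * μ (ball x r)

/-- The upper `Φ`-dimension of a measure `μ`. -/
noncomputable def upperPhiDim (Φ : ℝ → ℝ) (μ : Measure ℝ) : ℝ≥0∞ :=
  ⨅ (d : ℝ) (_ : upperDimAdmissible Φ μ d), ENNReal.ofReal d

/-- `d` is admissible for the lower `Φ`-dimension of `μ`. -/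
def lowerDimAdmissible (Φ : ℝ → ℝ) (μ : Measure ℝ) (d : ℝ) : Prop :=
  ∃ C₁ > (0:ℝ), ∃ C₂ > (0:ℝ), ∀ x ∈ measSupport μ, ∀ R r : ℝ,
    0 < r → r < R ^ (1 + Φ R) → R ^ (1 + Φ R) ≤ R → R ≤ C₁ →
    ENNReal.ofReal (C₂ * (R / r) ^ d) * μ (ball x r) ≤ μ (ball x R)

/-- The lower `Φ`-dimension of a measure `μ`. -/
noncomputable def lowerPhiDim (Φ : ℝ → ℝ) (μ : Measure ℝ) : ℝ≥0∞ :=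
  ⨆ (d : ℝ) (_ : lowerDimAdmissible Φ μ d), ENNReal.ofReal d

/-- The upper quasi-Assouad dimension `dim_qA μ = lim_{θ→1⁻} dim̄_{Φ_θ} μ`, where
`Φ_θ = 1/θ - 1`; by monotonicity the limit is the supremum over `θ ∈ (0,1)`. -/
noncomputable def qADim (μ : Measure ℝ) : ℝ≥0∞ :=
  ⨆ (θ : ℝ) (_ : θ ∈ Ioo (0:ℝ) 1), upperPhiDim (fun _ => 1 / θ - 1) μ

/-- The upper local dimension `limsup_{r→0⁺} log μ(B(x,r)) / log r`. -/
noncomputable def upperLocalDim (μ : Measure ℝ) (x : ℝ) : ℝ≥0∞ :=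
  Filter.limsup (fun r : ℝ => ENNReal.ofReal (Real.log ((μ (ball x r)).toReal) / Real.log r))
    (nhdsWithin 0 (Ioi 0))

/-- The lower local dimension `liminf_{r→0⁺} log μ(B(x,r)) / log r`. -/
noncomputable def lowerLocalDim (μ : Measure ℝ) (x : ℝ) : ℝ≥0∞ :=
  Filter.liminf (fun r : ℝ => ENNReal.ofReal (Real.log ((μ (ball x r)).toReal) / Real.log r))
    (nhdsWithin 0 (Ioi 0))

/-- `μ` is the random Moran measure determined by the scaling data `a, b` and
probability data `p`: a Borel probability measure supported on the Moran set whose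
value on each Moran interval is the prescribed mass. -/
def IsMoranMeasure (a b p : ℕ → ℝ) (μ : Measure ℝ) : Prop :=
  IsProbabilityMeasure μ ∧ measSupport μ = moranSet a b ∧
    ∀ v : List Bool, μ (moranInt a b v) = ENNReal.ofReal (moranMass p v)

/-- The random variable `Y_n(θ)`. -/
def Yrv {Ω : Type*} (a b p : Ω → ℕ → ℝ) (θ : ℝ) (n : ℕ) (ω : Ω) : ℝ :=
  if p ω n ≤ a ω n ^ θ / (a ω n ^ θ + b ω n ^ θ) then Real.log (p ω n)
  else Real.log (1 - p ω n)

/-- The random variable `Z_n(θ)`. -/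
def Zrv {Ω : Type*} (a b p : Ω → ℕ → ℝ) (θ : ℝ) (n : ℕ) (ω : Ω) : ℝ :=
  if p ω n ≤ a ω n ^ θ / (a ω n ^ θ + b ω n ^ θ) then Real.log (a ω n)
  else Real.log (b ω n)

/-- The random variable `Y_n'(θ)` (the two cases interchanged). -/
def Yrv' {Ω : Type*} (a b p : Ω → ℕ → ℝ) (θ : ℝ) (n : ℕ) (ω : Ω) : ℝ :=
  if a ω n ^ θ / (a ω n ^ θ + b ω n ^ θ) ≤ p ω n then Real.log (p ω n)
  else Real.log (1 - p ω n)

/-- The random variable `Z_n'(θ)` (the two cases interchanged). -/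
def Zrv' {Ω : Type*} (a b p : Ω → ℕ → ℝ) (θ : ℝ) (n : ℕ) (ω : Ω) : ℝ :=
  if a ω n ^ θ / (a ω n ^ θ + b ω n ^ θ) ≤ p ω n then Real.log (a ω n)
  else Real.log (b ω n)

/-- `G(θ) = E(Y₁(θ)) / E(Z₁(θ))`. -/
noncomputable def Gfn {Ω : Type*} [MeasurableSpace Ω] (P : Measure Ω)
    (a b p : Ω → ℕ → ℝ) (θ : ℝ) : ℝ :=
  (∫ ω, Yrv a b p θ 1 ω ∂P) / (∫ ω, Zrv a b p θ 1 ω ∂P)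

/-- `G'(θ) = E(Y₁'(θ)) / E(Z₁'(θ))`. -/
noncomputable def Gfn' {Ω : Type*} [MeasurableSpace Ω] (P : Measure Ω)
    (a b p : Ω → ℕ → ℝ) (θ : ℝ) : ℝ :=
  (∫ ω, Yrv' a b p θ 1 ω ∂P) / (∫ ω, Zrv' a b p θ 1 ω ∂P)

/-- `ζ_N^H = H(B^N)·log(N·|log B|)/|log A|`. -/
noncomputable def zetaNH (A B : ℝ) (H : ℝ → ℝ) (N : ℕ) : ℝ :=
  H (B ^ N) * Real.log (N * |Real.log B|) / |Real.log A|

/-- The full random data of the (two-children, one-dimensional) random Moran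
construction: i.i.d. scaling pairs `(aₙ, bₙ)` with values in
`{(x,y) : A ≤ min x y, x + y ≤ B}`, i.i.d. probabilities `pₙ ∈ [0,1]` independent of
the scaling pairs, with negative moments `E(a₁^{-t}), E(b₁^{-t}), E(p₁^{-t}),
E((1-p₁)^{-t}) < ∞` for some `t > 0`. -/
structure MoranSystem (Ω : Type*) [MeasurableSpace Ω] (P : Measure Ω) (A B : ℝ) where
  a : Ω → ℕ → ℝ
  b : Ω → ℕ → ℝ
  p : Ω → ℕ → ℝ
  meas_ab : ∀ n, Measurable fun ω => (a ω n, b ω n)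
  meas_p : ∀ n, Measurable fun ω => p ω n
  range_ab : ∀ ω n, A ≤ min (a ω n) (b ω n) ∧ a ω n + b ω n ≤ B
  range_p : ∀ ω n, p ω n ∈ Icc (0:ℝ) 1
  indep_ab : iIndepFun (fun n ω => (a ω n, b ω n)) P
  ident_ab : ∀ n, IdentDistrib (fun ω => (a ω n, b ω n)) (fun ω => (a ω 1, b ω 1)) P P
  indep_p : iIndepFun (fun n ω => p ω n) P
  ident_p : ∀ n, IdentDistrib (fun ω => p ω n) (fun ω => p ω 1) P P
  indep_ab_p : IndepFun (fun ω (n : ℕ) => (a ω n, b ω n)) (fun ω (n : ℕ) => p ω n) P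
  moment : ∃ t : ℝ, 0 < t ∧ Integrable (fun ω => a ω 1 ^ (-t)) P ∧
    Integrable (fun ω => b ω 1 ^ (-t)) P ∧ Integrable (fun ω => p ω 1 ^ (-t)) P ∧
    Integrable (fun ω => (1 - p ω 1) ^ (-t)) P

/-- The value `α = max(log P₀/log A₀, log Q₀/log B₀)`, understood as `∞` when
`P₀ = 0` or `Q₀ = 0`. -/
noncomputable def alphaVal (P₀ Q₀ A₀ B₀ : ℝ) : ℝ≥0∞ :=
  if P₀ = 0 ∨ Q₀ = 0 then ⊤
  else ENNReal.ofReal (max (Real.log P₀ / Real.log A₀) (Real.log Q₀ / Real.log B₀))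

private theorem crossing_abstract (g : ℝ → ℝ) (K : ℝ)
    (hg0 : ∀ θ : ℝ, 0 ≤ g θ) (hgK : ∀ θ : ℝ, g θ ≤ K)
    (hGcont : ContinuousOn g (Ici (0:ℝ))) :
    ∃! α : ℝ, 0 ≤ α ∧ g α = α ∧ ∀ ψ : ℝ, α < ψ → g ψ < ψ := by
  classical
  set Sset : Set ℝ := {θ : ℝ | 0 ≤ θ ∧ θ ≤ g θ} with hSset
  have h0S : (0:ℝ) ∈ Sset := ⟨le_refl 0, hg0 0⟩
  have hbdd : BddAbove Sset := ⟨K, fun θ hθ => le_trans hθ.2 (hgK θ)⟩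
  set α := sSup Sset with hαdef
  have hα0 : 0 ≤ α := le_csSup hbdd h0S
  have hcont : ContinuousWithinAt g (Ici 0) α := hGcont α hα0
  rw [Metric.continuousWithinAt_iff] at hcont
  have hgt : ∀ ψ : ℝ, α < ψ → g ψ < ψ := by
    intro ψ hψ
    by_contra h
    push_neg at h
    exact absurd (le_csSup hbdd ⟨le_trans hα0 hψ.le, h⟩) (not_le.mpr hψ)
  have h1 : g α ≤ α := by
    by_contra h
    push_neg at h
    obtain ⟨δ, hδ, hδ'⟩ := hcont ((g α - α) / 2) (by linarith)
    set θ := α + min δ (g α - α) / 2 with hθdef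
    have hmin : 0 < min δ (g α - α) := lt_min hδ (by linarith)
    have hθα : α < θ := by simp only [hθdef]; linarith
    have hθs : θ ∈ Ici (0:ℝ) := le_trans hα0 hθα.le
    have hd : dist θ α < δ := by
      rw [Real.dist_eq, hθdef]
      have : |α + min δ (g α - α) / 2 - α| = min δ (g α - α) / 2 := by
        rw [show α + min δ (g α - α) / 2 - α = min δ (g α - α) / 2 by ring]
        exact abs_of_pos (by linarith)
      rw [this]
      have := min_le_left δ (g α - α)
      linarith
    have hdist := hδ' hθs hd
    rw [Real.dist_eq, abs_lt] at hdist
    have hθle : θ ≤ g θ := by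
      have h2 := min_le_right δ (g α - α)
      simp only [hθdef]
      linarith [hdist.1]
    exact absurd (hgt θ hθα) (not_lt.mpr hθle)
  have h2 : α ≤ g α := by
    by_contra h
    push_neg at h
    obtain ⟨δ, hδ, hδ'⟩ := hcont ((α - g α) / 2) (by linarith)
    have hmin : 0 < min δ ((α - g α) / 2) := lt_min hδ (by linarith)
    obtain ⟨θ, hθS, hθgt⟩ := exists_lt_of_lt_csSup ⟨0, h0S⟩
      (show α - min δ ((α - g α) / 2) < sSup Sset from by rw [← hαdef]; linarith)
    have hθα : θ ≤ α := le_csSup hbdd hθS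
    have hd : dist θ α < δ := by
      rw [Real.dist_eq, abs_lt]
      have := min_le_left δ ((α - g α) / 2)
      constructor <;> linarith
    have hdist := hδ' hθS.1 hd
    rw [Real.dist_eq, abs_lt] at hdist
    have h3 := min_le_right δ ((α - g α) / 2)
    linarith [hθS.2, hdist.2]
  refine ⟨α, ⟨hα0, le_antisymm h1 h2, hgt⟩, ?_⟩
  rintro β ⟨hβ0, hβeq, hβlt⟩
  by_contra hne
  rcases lt_or_gt_of_ne hne with hlt | hlt
  · have := hβlt α hlt
    rw [le_antisymm h1 h2] at this
    exact lt_irrefl α this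
  · have := hgt β hlt
    rw [hβeq] at this
    exact lt_irrefl β this

/-- Lemma 6: if `E(log p₁)` and `E(log(1-p₁))` are finite and `G` is
continuous on `[0,∞)`, then there is a unique `α ≥ 0` with `G(α) = α` and `G(ψ) < ψ`
for all `ψ > α`. -/
theorem exists_unique_G_crossing {Ω : Type*} [MeasurableSpace Ω] (P : Measure Ω) [IsProbabilityMeasure P]
    (A B : ℝ) (hA : 0 < A) (hAB : A < B) (hB1 : B < 1)
    (S : MoranSystem Ω P A B)
    (hint1 : Integrable (fun ω => Real.log (S.p ω 1)) P)
    (hint2 : Integrable (fun ω => Real.log (1 - S.p ω 1)) P)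
    (hGcont : ContinuousOn (Gfn P S.a S.b S.p) (Ici (0:ℝ))) :
    ∃! α : ℝ, 0 ≤ α ∧ Gfn P S.a S.b S.p α = α ∧
      ∀ ψ : ℝ, α < ψ → Gfn P S.a S.b S.p ψ < ψ  := by
  classical
  -- basic measurability
  have hma : Measurable fun ω => S.a ω 1 := measurable_fst.comp (S.meas_ab 1)
  have hmb : Measurable fun ω => S.b ω 1 := measurable_snd.comp (S.meas_ab 1)
  have hmp : Measurable fun ω => S.p ω 1 := S.meas_p 1
  -- pointwise range facts
  have hrange : ∀ ω : Ω, A ≤ S.a ω 1 ∧ A ≤ S.b ω 1 ∧ S.a ω 1 ≤ B - A ∧ S.b ω 1 ≤ B - A := by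
    intro ω
    obtain ⟨h1, h2⟩ := S.range_ab ω 1
    have ha := le_trans h1 (min_le_left _ _)
    have hb := le_trans h1 (min_le_right _ _)
    exact ⟨ha, hb, by linarith, by linarith⟩
  have hBA0 : (0:ℝ) < B - A := by linarith
  have hBA1 : B - A < 1 := by linarith
  have hlogBA : Real.log (B - A) < 0 := Real.log_neg hBA0 hBA1
  have hlogA : Real.log A < 0 := Real.log_neg hA (by linarith)
  -- Z bounds
  have hZle : ∀ θ : ℝ, ∀ ω : Ω, Zrv S.a S.b S.p θ 1 ω ≤ Real.log (B - A) := by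
    intro θ ω
    obtain ⟨ha, hb, ha', hb'⟩ := hrange ω
    unfold Zrv
    split
    · exact Real.log_le_log (by linarith) ha'
    · exact Real.log_le_log (by linarith) hb'
  have hZge : ∀ θ : ℝ, ∀ ω : Ω, Real.log A ≤ Zrv S.a S.b S.p θ 1 ω := by
    intro θ ω
    obtain ⟨ha, hb, ha', hb'⟩ := hrange ω
    unfold Zrv
    split
    · exact Real.log_le_log hA ha
    · exact Real.log_le_log hA hb
  -- measurability of Y and Z
  have hcondmeas : ∀ θ : ℝ,
      MeasurableSet {ω : Ω | S.p ω 1 ≤ S.a ω 1 ^ θ / (S.a ω 1 ^ θ + S.b ω 1 ^ θ)} := by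
    intro θ
    have hr : Measurable fun x : ℝ => x ^ θ := by measurability
    exact measurableSet_le hmp (((hr.comp hma).div ((hr.comp hma).add (hr.comp hmb))))
  have hZmeas : ∀ θ : ℝ, Measurable (Zrv S.a S.b S.p θ 1) := by
    intro θ
    unfold Zrv
    exact Measurable.ite (hcondmeas θ) (Real.measurable_log.comp hma)
      (Real.measurable_log.comp hmb)
  have hYmeas : ∀ θ : ℝ, Measurable (Yrv S.a S.b S.p θ 1) := by
    intro θ
    unfold Yrv
    exact Measurable.ite (hcondmeas θ) (Real.measurable_log.comp hmp)
      (Real.measurable_log.comp (measurable_const.sub hmp))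
  -- integrability of Z and the key denominator bound
  have hZint : ∀ θ : ℝ, Integrable (Zrv S.a S.b S.p θ 1) P := by
    intro θ
    refine ⟨(hZmeas θ).aestronglyMeasurable, ?_⟩
    refine HasFiniteIntegral.of_bounded (C := -Real.log A) (ae_of_all _ fun ω => ?_)
    rw [Real.norm_eq_abs, abs_le]
    exact ⟨by rw [neg_neg]; exact hZge θ ω, by linarith [hZle θ ω, hlogBA, hlogA]⟩
  have hEZ : ∀ θ : ℝ, ∫ ω, Zrv S.a S.b S.p θ 1 ω ∂P ≤ Real.log (B - A) := by
    intro θ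
    calc ∫ ω, Zrv S.a S.b S.p θ 1 ω ∂P
        ≤ ∫ _ω, Real.log (B - A) ∂P := integral_mono (hZint θ) (integrable_const _) (hZle θ)
      _ = Real.log (B - A) := by simp
  -- Y bounds
  have hYle0 : ∀ θ : ℝ, ∀ ω : Ω, Yrv S.a S.b S.p θ 1 ω ≤ 0 := by
    intro θ ω
    obtain ⟨hp0, hp1⟩ := S.range_p ω 1
    unfold Yrv
    split
    · exact Real.log_nonpos hp0 hp1
    · exact Real.log_nonpos (by linarith) (by linarith)
  have hYabs : ∀ θ : ℝ, ∀ ω : Ω,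
      |Yrv S.a S.b S.p θ 1 ω| ≤ |Real.log (S.p ω 1)| + |Real.log (1 - S.p ω 1)| := by
    intro θ ω
    unfold Yrv
    split
    · exact le_add_of_le_of_nonneg le_rfl (abs_nonneg _)
    · exact le_add_of_nonneg_of_le (abs_nonneg _) le_rfl
  have hFint : Integrable (fun ω => |Real.log (S.p ω 1)| + |Real.log (1 - S.p ω 1)|) P :=
    hint1.abs.add hint2.abs
  have hYint : ∀ θ : ℝ, Integrable (Yrv S.a S.b S.p θ 1) P := by
    intro θ
    refine hFint.mono ((hYmeas θ).aestronglyMeasurable) (ae_of_all _ fun ω => ?_)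
    rw [Real.norm_eq_abs, Real.norm_eq_abs]
    exact le_trans (hYabs θ ω) (le_abs_self _)
  set M : ℝ := ∫ ω, (|Real.log (S.p ω 1)| + |Real.log (1 - S.p ω 1)|) ∂P with hMdef
  have hM0 : 0 ≤ M := integral_nonneg fun ω => by positivity
  have hEY0 : ∀ θ : ℝ, ∫ ω, Yrv S.a S.b S.p θ 1 ω ∂P ≤ 0 := by
    intro θ
    exact integral_nonpos (hYle0 θ)
  have hEYM : ∀ θ : ℝ, -M ≤ ∫ ω, Yrv S.a S.b S.p θ 1 ω ∂P := by
    intro θ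
    have : ∫ ω, -Yrv S.a S.b S.p θ 1 ω ∂P ≤ M := by
      refine integral_mono (hYint θ).neg hFint fun ω => ?_
      have := hYabs θ ω
      have := neg_abs_le (Yrv S.a S.b S.p θ 1 ω)
      have := le_abs_self (Yrv S.a S.b S.p θ 1 ω)
      linarith [abs_nonneg (Yrv S.a S.b S.p θ 1 ω)]
    rw [integral_neg] at this
    linarith
  -- bounds on G
  set K : ℝ := M / (-Real.log (B - A)) with hKdef
  have hg0 : ∀ θ : ℝ, 0 ≤ Gfn P S.a S.b S.p θ := by
    intro θ
    exact div_nonneg_of_nonpos (hEY0 θ) (le_trans (hEZ θ) hlogBA.le)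
  have hgK : ∀ θ : ℝ, Gfn P S.a S.b S.p θ ≤ K := by
    intro θ
    have h1 : Gfn P S.a S.b S.p θ
        = (-∫ ω, Yrv S.a S.b S.p θ 1 ω ∂P) / (-∫ ω, Zrv S.a S.b S.p θ 1 ω ∂P) := by
      rw [neg_div_neg_eq]; rfl
    rw [h1, hKdef]
    refine div_le_div₀ hM0 (by linarith [hEYM θ]) (by linarith) (by linarith [hEZ θ])
  exact crossing_abstract _ K hg0 hgK hGcont


end
end

section
/- Let a, b ∈ (0,1) with a + b < 1, let a_n ≡ a and b_n ≡ b be deterministic, and let p_n be i.i.d. uniformly distributed on [0,1]. Then G(θ) = (a^θ·log(a^θ/(a^θ+b^θ)) − a^θ + b^θ·log(b^θ/(a^θ+b^θ)) − b^θ)/(a^θ·log a + b^θ·log b) for θ ≥ 0, and G(θ) ≥ θ if and only if a^θ + b^θ ≥ e^{−1}. -/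
open MeasureTheory ProbabilityTheory Filter Set Metric
open scoped ENNReal NNReal

noncomputable section

section LogHelpers
open Real
open scoped Topology

lemma log_intInt {c : ℝ} (hc : 0 < c) (hc1 : c ≤ 1) :
    IntervalIntegrable Real.log volume 0 c := by
  rw [intervalIntegrable_iff_integrableOn_Ioc_of_le hc.le]
  have hg : IntegrableOn (fun x : ℝ => 2 * x ^ (-(1/2) : ℝ)) (Ioc 0 c) volume := by
    have := (intervalIntegral.intervalIntegrable_rpow' (a := 0) (b := c)
      (r := -(1/2)) (by norm_num)).const_mul 2
    rwa [intervalIntegrable_iff_integrableOn_Ioc_of_le hc.le] at this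
  refine hg.integrable.mono Real.measurable_log.aestronglyMeasurable.restrict ?_
  filter_upwards [ae_restrict_mem measurableSet_Ioc] with x hx
  have hx0 : 0 < x := hx.1
  have hx1 : x ≤ 1 := hx.2.trans hc1
  have hlog : Real.log x ≤ 0 := Real.log_nonpos hx0.le hx1
  have hb : -Real.log x ≤ 2 * x ^ (-(1/2) : ℝ) := by
    have h1 : Real.log (x ^ (-(1/2) : ℝ)) ≤ x ^ (-(1/2) : ℝ) - 1 :=
      Real.log_le_sub_one_of_pos (Real.rpow_pos_of_pos hx0 _)
    rw [Real.log_rpow hx0] at h1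
    nlinarith [Real.rpow_pos_of_pos hx0 (-(1/2) : ℝ)]
  have hgpos : 0 ≤ 2 * x ^ (-(1/2) : ℝ) := by positivity
  simp only [norm_eq_abs, abs_of_nonpos hlog, abs_of_nonneg hgpos]
  exact hb

lemma integral_log_zero {c : ℝ} (hc : 0 < c) (hc1 : c ≤ 1) :
    ∫ x in (0:ℝ)..c, Real.log x = c * Real.log c - c := by
  have hInt : IntegrableOn Real.log (Ioc 0 c) volume := by
    have := log_intInt hc hc1
    rwa [intervalIntegrable_iff_integrableOn_Ioc_of_le hc.le] at this
  set φ : ℕ → Set ℝ := fun n => Ioc (c / (n + 2)) c with hφ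
  have hεpos : ∀ n : ℕ, 0 < c / (n + 2) := fun n => by positivity
  have hunion : (⋃ n, φ n) = Ioc 0 c := by
    ext x
    simp only [mem_iUnion, mem_Ioc, hφ]
    constructor
    · rintro ⟨n, h1, h2⟩; exact ⟨lt_trans (hεpos n) h1, h2⟩
    · rintro ⟨h1, h2⟩
      obtain ⟨n, hn⟩ := exists_nat_gt (c / x)
      refine ⟨n, ?_, h2⟩
      rw [div_lt_iff₀ (by positivity)]
      have hcx : c = (c / x) * x := by field_simp
      nlinarith
  have hmono : Monotone φ := by
    intro m n hmn
    apply Ioc_subset_Ioc_left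
    apply div_le_div_of_nonneg_left hc.le (by positivity)
    have : (m : ℝ) ≤ n := Nat.cast_le.2 hmn
    linarith
  have htends := tendsto_setIntegral_of_monotone (fun n => measurableSet_Ioc) hmono
    (by rw [hunion]; exact hInt) (f := Real.log)
  rw [hunion] at htends
  have heval : ∀ n : ℕ, ∫ x in φ n, Real.log x
      = c * Real.log c - c - ((c / (n+2)) * Real.log (c / (n+2)) - c / (n+2)) := by
    intro n
    have hle : c / (n + 2) ≤ c := by
      rw [div_le_iff₀ (by positivity)]; nlinarith
    rw [← intervalIntegral.integral_of_le hle, integral_log]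
    ring
  have hlim : Tendsto (fun n : ℕ => ∫ x in φ n, Real.log x) atTop
      (𝓝 (c * Real.log c - c - 0)) := by
    simp only [heval]
    apply Tendsto.sub tendsto_const_nhds
    have h1 : Tendsto (fun n : ℕ => c / (n + 2)) atTop (𝓝[>] 0) := by
      rw [tendsto_nhdsWithin_iff]
      constructor
      · have : Tendsto (fun n : ℕ => (n : ℝ) + 2) atTop atTop :=
          tendsto_natCast_atTop_atTop.atTop_add tendsto_const_nhds
        exact Tendsto.div_atTop tendsto_const_nhds this
      · exact Eventually.of_forall fun n => hεpos n
    have h2 : Tendsto (fun x : ℝ => x * Real.log x - x) (𝓝[>] 0) (𝓝 0) := by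
      have h3 := tendsto_log_mul_rpow_nhdsGT_zero (r := 1) one_pos
      have h4 : Tendsto (fun x : ℝ => x) (𝓝[>] 0) (𝓝 0) :=
        tendsto_id.mono_left nhdsWithin_le_nhds
      have h5 : Tendsto (fun x : ℝ => x * Real.log x) (𝓝[>] 0) (𝓝 0) := by
        exact h3.congr fun x => by rw [Real.rpow_one]; ring
      simpa using h5.sub h4
    exact h2.comp h1
  have := tendsto_nhds_unique htends hlim
  rw [intervalIntegral.integral_of_le hc.le, this, sub_zero]

end LogHelpers

/-- for constant ratios `a, b` and i.i.d. uniform probabilities,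
`G(θ)` is given by the explicit formula, and `G(θ) ≥ θ` iff `a^θ + b^θ ≥ e⁻¹`. -/
theorem G_formula_uniform {Ω : Type*} [MeasurableSpace Ω] (P : Measure Ω)
    [IsProbabilityMeasure P]
    (a b : ℝ) (ha : a ∈ Ioo (0:ℝ) 1) (hb : b ∈ Ioo (0:ℝ) 1) (hab : a + b < 1)
    (p : Ω → ℕ → ℝ) (hpmeas : ∀ n, Measurable fun ω => p ω n)
    (hprange : ∀ ω n, p ω n ∈ Icc (0:ℝ) 1)
    (hpindep : iIndepFun (fun n ω => p ω n) P)
    (hpunif : ∀ n, Measure.map (fun ω => p ω n) P = volume.restrict (Icc (0:ℝ) 1)) :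
    ∀ θ : ℝ, 0 ≤ θ →
      Gfn P (fun _ _ => a) (fun _ _ => b) p θ =
        (a ^ θ * Real.log (a ^ θ / (a ^ θ + b ^ θ)) - a ^ θ +
          b ^ θ * Real.log (b ^ θ / (a ^ θ + b ^ θ)) - b ^ θ) /
        (a ^ θ * Real.log a + b ^ θ * Real.log b) ∧
      (θ ≤ Gfn P (fun _ _ => a) (fun _ _ => b) p θ ↔
        Real.exp (-1) ≤ a ^ θ + b ^ θ) := by
  intro θ hθ
  have hA : (0:ℝ) < a ^ θ := Real.rpow_pos_of_pos ha.1 θ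
  have hB : (0:ℝ) < b ^ θ := Real.rpow_pos_of_pos hb.1 θ
  set A := a ^ θ with hAdef
  set B := b ^ θ with hBdef
  set S := A + B with hSdef
  have hS : (0:ℝ) < S := by positivity
  set c := A / S with hcdef
  have hc : 0 < c := by positivity
  have hc1 : c < 1 := by rw [hcdef, div_lt_one hS]; rw [hSdef]; linarith
  have h1c : 1 - c = B / S := by rw [hcdef, hSdef]; field_simp; ring
  have hc1' : (0:ℝ) < 1 - c := by linarith
  -- E(Y)
  set f : ℝ → ℝ := fun t => if t ≤ c then Real.log t else Real.log (1 - t) with hfdef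
  have hfmeas : Measurable f :=
    Measurable.ite (measurableSet_le measurable_id measurable_const)
      Real.measurable_log (Real.measurable_log.comp (measurable_const.sub measurable_id))
  have hIlog : IntegrableOn Real.log (Ioc 0 c) volume := by
    have := log_intInt hc hc1.le
    rwa [intervalIntegrable_iff_integrableOn_Ioc_of_le hc.le] at this
  have hI1 : IntegrableOn f (Ioc 0 c) volume :=
    hIlog.congr_fun (fun t ht => (if_pos ht.2).symm) measurableSet_Ioc
  have hIlog2 : IntegrableOn (fun t => Real.log (1 - t)) (Ioc c 1) volume := by
    have h0 := (log_intInt hc1' (by linarith)).comp_sub_left 1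
    simp only [sub_zero, sub_sub_cancel] at h0
    replace h0 := h0.symm
    rw [intervalIntegrable_iff_integrableOn_Ioc_of_le hc1.le] at h0
    exact h0
  have hI2 : IntegrableOn f (Ioc c 1) volume :=
    hIlog2.congr_fun (fun t ht => (if_neg (not_le.2 ht.1)).symm) measurableSet_Ioc
  have v1 : ∫ t in Ioc 0 c, f t = c * Real.log c - c := by
    rw [setIntegral_congr_fun measurableSet_Ioc (fun t ht => if_pos ht.2),
      ← intervalIntegral.integral_of_le hc.le]
    exact integral_log_zero hc hc1.le
  have v2 : ∫ t in Ioc c 1, f t = (1 - c) * Real.log (1 - c) - (1 - c) := by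
    rw [setIntegral_congr_fun measurableSet_Ioc (fun t ht => if_neg (not_le.2 ht.1)),
      ← intervalIntegral.integral_of_le hc1.le]
    have := intervalIntegral.integral_comp_sub_left (a := c) (b := 1) Real.log 1
    simp only [sub_self, sub_zero] at this
    rw [this, integral_log_zero hc1' (by linarith)]
  have hY : (∫ ω, Yrv (fun _ _ => a) (fun _ _ => b) p θ 1 ω ∂P)
      = c * Real.log c + (1 - c) * Real.log (1 - c) - 1 := by
    have h1 : (∫ ω, Yrv (fun _ _ => a) (fun _ _ => b) p θ 1 ω ∂P)
        = ∫ ω, f (p ω 1) ∂P := by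
      apply integral_congr_ae; filter_upwards with ω
      simp only [Yrv, hfdef, hcdef, hSdef, hAdef, hBdef]
    rw [h1, ← integral_map (hpmeas 1).aemeasurable hfmeas.aestronglyMeasurable,
      hpunif 1, integral_Icc_eq_integral_Ioc,
      ← Ioc_union_Ioc_eq_Ioc hc.le hc1.le,
      setIntegral_union (Ioc_disjoint_Ioc_of_le le_rfl) measurableSet_Ioc hI1 hI2, v1, v2]
    ring
  -- E(Z)
  set g : ℝ → ℝ := fun t => if t ≤ c then Real.log a else Real.log b with hgdef
  have hgmeas : Measurable g :=
    Measurable.ite (measurableSet_le measurable_id measurable_const)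
      measurable_const measurable_const
  have hgI1 : IntegrableOn g (Ioc 0 c) volume :=
    (integrableOn_const (by simp [Real.volume_Ioc])).congr_fun
      (fun t ht => (if_pos ht.2).symm) measurableSet_Ioc
  have hgI2 : IntegrableOn g (Ioc c 1) volume :=
    (integrableOn_const (by simp [Real.volume_Ioc])).congr_fun
      (fun t ht => (if_neg (not_le.2 ht.1)).symm) measurableSet_Ioc
  have w1 : ∫ t in Ioc 0 c, g t = c * Real.log a := by
    rw [setIntegral_congr_fun measurableSet_Ioc (fun t ht => if_pos ht.2),
      setIntegral_const, Real.volume_real_Ioc_of_le hc.le, smul_eq_mul,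
      sub_zero]
  have w2 : ∫ t in Ioc c 1, g t = (1 - c) * Real.log b := by
    rw [setIntegral_congr_fun measurableSet_Ioc (fun t ht => if_neg (not_le.2 ht.1)),
      setIntegral_const, Real.volume_real_Ioc_of_le hc1.le, smul_eq_mul]
  have hZ : (∫ ω, Zrv (fun _ _ => a) (fun _ _ => b) p θ 1 ω ∂P)
      = c * Real.log a + (1 - c) * Real.log b := by
    have h1 : (∫ ω, Zrv (fun _ _ => a) (fun _ _ => b) p θ 1 ω ∂P)
        = ∫ ω, g (p ω 1) ∂P := by
      apply integral_congr_ae; filter_upwards with ω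
      simp only [Zrv, hgdef, hcdef, hSdef, hAdef, hBdef]
    rw [h1, ← integral_map (hpmeas 1).aemeasurable hgmeas.aestronglyMeasurable,
      hpunif 1, integral_Icc_eq_integral_Ioc,
      ← Ioc_union_Ioc_eq_Ioc hc.le hc1.le,
      setIntegral_union (Ioc_disjoint_Ioc_of_le le_rfl) measurableSet_Ioc hgI1 hgI2, w1, w2]
  -- algebra
  have hla : Real.log a < 0 := Real.log_neg ha.1 ha.2
  have hlb : Real.log b < 0 := Real.log_neg hb.1 hb.2
  have hEZneg : c * Real.log a + (1 - c) * Real.log b < 0 := by nlinarith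
  have hG : Gfn P (fun _ _ => a) (fun _ _ => b) p θ
      = (c * Real.log c + (1 - c) * Real.log (1 - c) - 1)
        / (c * Real.log a + (1 - c) * Real.log b) := by
    rw [Gfn, hY, hZ]
  have hlogc : Real.log c = θ * Real.log a - Real.log S := by
    rw [hcdef, Real.log_div hA.ne' hS.ne', hAdef, Real.log_rpow ha.1]
  have hlog1c : Real.log (1 - c) = θ * Real.log b - Real.log S := by
    rw [h1c, Real.log_div hB.ne' hS.ne', hBdef, Real.log_rpow hb.1]
  have hAc : A = c * S := by rw [hcdef]; field_simp
  have hBc : B = (1 - c) * S := by rw [h1c]; field_simp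
  constructor
  · rw [hG]
    have hnum : A * Real.log (A / S) - A + B * Real.log (B / S) - B
        = S * (c * Real.log c + (1 - c) * Real.log (1 - c) - 1) := by
      rw [← hcdef, ← h1c, hAc, hBc]; ring
    have hden : A * Real.log a + B * Real.log b
        = S * (c * Real.log a + (1 - c) * Real.log b) := by
      rw [hAc, hBc]; ring
    rw [hnum, hden, mul_div_mul_left _ _ hS.ne']
  · rw [hG]
    have hEY : c * Real.log c + (1 - c) * Real.log (1 - c) - 1
        = θ * (c * Real.log a + (1 - c) * Real.log b) - (Real.log S + 1) := by
      rw [hlogc, hlog1c]; ring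
    set EZ := c * Real.log a + (1 - c) * Real.log b with hEZdef
    have hdiv : (c * Real.log c + (1 - c) * Real.log (1 - c) - 1) / EZ
        = θ + (Real.log S + 1) / (-EZ) := by
      have hEZne : EZ ≠ 0 := ne_of_lt hEZneg
      rw [hEY, sub_div, mul_div_assoc, div_self hEZne, mul_one, div_neg, sub_eq_add_neg]
    rw [hdiv]
    have h2 : (θ ≤ θ + (Real.log S + 1) / (-EZ)) ↔ 0 ≤ (Real.log S + 1) / (-EZ) := by
      constructor <;> intro h <;> linarith
    rw [h2, le_div_iff₀ (by linarith : (0:ℝ) < -EZ), zero_mul,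
      show (0 ≤ Real.log S + 1) ↔ (-1 ≤ Real.log S) from by constructor <;> intro <;> linarith,
      Real.le_log_iff_exp_le hS]

end
end
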